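/- arXiv:2305.18118 — 2 statements merged into one kernel-verified Lean document; each statement's English description precedes it below -/
import Mathlib

section
/- Let λ be a finite complex measure on ℝ whose support is contained in [0, ∞), and define f : ℝ → ℂ by f(t) = ∫ exp(i p t) dλ(p). If f vanishes on some nonempty open interval (a, b) ⊂ ℝ, then f vanishes identically on ℝ. -/
/-!
Since `λ` lives on `[0, ∞)`, `F z = ∫ exp(ipz) dλ(p)` is holomorphic on the upper half-plane and
continuous up to the real axis, where it restricts to `f`. Extended by `0` below the axis, `F`
becomes continuous on the upper half-plane together with the vertical strip over `(a, b)`, and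
holomorphic off the real axis; cutting rectangles along the axis shows that its rectangle
integrals vanish, so by Morera's theorem it is holomorphic there. It vanishes on the lower half
of the strip, so by the identity theorem `F` vanishes on the upper half-plane, and by continuity
on `ℝ`.
-/

open MeasureTheory Complex Set Filter Topology intervalIntegral
open scoped Interval

lemma ContinuousOn.intervalIntegrable_vertical {E : Type*} [NormedAddCommGroup E] {f : ℂ → E}
    {z w : ℂ} (hc : ContinuousOn f (Rectangle z w)) {x : ℝ} (hx : x ∈ [[z.re, w.re]]) {s t : ℝ}
    (hs : s ∈ [[z.im, w.im]]) (ht : t ∈ [[z.im, w.im]]) :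
    IntervalIntegrable (fun y : ℝ ↦ f (x + y * I)) volume s t :=
  (hc.comp (by fun_prop) fun y hy ↦
    ⟨by simpa using hx, by simpa using uIcc_subset_uIcc hs ht hy⟩).intervalIntegrable

section HalfPlane

variable {E : Type*} [NormedAddCommGroup E] [NormedSpace ℂ E]

lemma integral_boundary_rect_eq_zero_of_zero_notMem_Ioo {f : ℂ → E} {z w : ℂ}
    (hc : ContinuousOn f (Rectangle z w))
    (hd : ∀ u ∈ Rectangle z w, u.im ≠ 0 → DifferentiableAt ℂ f u)
    (h0 : (0 : ℝ) ∉ Ioo (min z.im w.im) (max z.im w.im)) :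
    (∫ x : ℝ in z.re..w.re, f (x + z.im * I)) - (∫ x : ℝ in z.re..w.re, f (x + w.im * I)) +
      I • (∫ y : ℝ in z.im..w.im, f (w.re + y * I)) -
      I • (∫ y : ℝ in z.im..w.im, f (z.re + y * I)) = 0 :=
  integral_boundary_rect_eq_zero_of_differentiable_on_off_countable f z w ∅ countable_empty hc
    fun u hu ↦ hd u ⟨Ioo_subset_Icc_self hu.1.1, Ioo_subset_Icc_self hu.1.2⟩
      fun h ↦ h0 (h ▸ hu.1.2)

lemma integral_boundary_rect_eq_zero_of_differentiableAt_im_ne_zero {f : ℂ → E} {z w : ℂ}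
    (hc : ContinuousOn f (Rectangle z w))
    (hd : ∀ u ∈ Rectangle z w, u.im ≠ 0 → DifferentiableAt ℂ f u) :
    (∫ x : ℝ in z.re..w.re, f (x + z.im * I)) - (∫ x : ℝ in z.re..w.re, f (x + w.im * I)) +
      I • (∫ y : ℝ in z.im..w.im, f (w.re + y * I)) -
      I • (∫ y : ℝ in z.im..w.im, f (z.re + y * I)) = 0 := by
  by_cases h0 : (0 : ℝ) ∈ Ioo (min z.im w.im) (max z.im w.im)
  swap
  · exact integral_boundary_rect_eq_zero_of_zero_notMem_Ioo hc hd h0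
  have h0' : (0 : ℝ) ∈ [[z.im, w.im]] := Ioo_subset_Icc_self h0
  have hlow : Rectangle z (w.re : ℂ) ⊆ Rectangle z w := by
    simpa [Rectangle] using
      reProdIm_subset_iff'.2 (Or.inl ⟨subset_rfl, uIcc_subset_uIcc_left h0'⟩)
  have hup : Rectangle (z.re : ℂ) w ⊆ Rectangle z w := by
    simpa [Rectangle] using
      reProdIm_subset_iff'.2 (Or.inl ⟨subset_rfl, uIcc_subset_uIcc_right h0'⟩)
  have E1 := integral_boundary_rect_eq_zero_of_zero_notMem_Ioo (hc.mono hlow)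
    (fun u hu ↦ hd u (hlow hu)) (by simpa using le_of_lt)
  have E2 := integral_boundary_rect_eq_zero_of_zero_notMem_Ioo (hc.mono hup)
    (fun u hu ↦ hd u (hup hu)) (by simpa using le_of_lt)
  simp only [ofReal_re, ofReal_im, ofReal_zero, zero_mul, add_zero] at E1 E2
  have hz : z.re ∈ [[z.re, w.re]] := left_mem_uIcc
  have hw : w.re ∈ [[z.re, w.re]] := right_mem_uIcc
  rw [← integral_add_adjacent_intervals (hc.intervalIntegrable_vertical hw left_mem_uIcc h0')
      (hc.intervalIntegrable_vertical hw h0' right_mem_uIcc),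
    ← integral_add_adjacent_intervals (hc.intervalIntegrable_vertical hz left_mem_uIcc h0')
      (hc.intervalIntegrable_vertical hz h0' right_mem_uIcc), smul_add, smul_add]
  linear_combination (norm := abel) E1 + E2

theorem differentiableOn_of_continuousOn_of_differentiableAt_im_ne_zero [CompleteSpace E]
    {f : ℂ → E} {U : Set ℂ} (hU : IsOpen U) (hc : ContinuousOn f U)
    (hd : ∀ z ∈ U, z.im ≠ 0 → DifferentiableAt ℂ f z) :
    DifferentiableOn ℂ f U := by
  refine (isConservativeOn_and_continuousOn_iff_isDifferentiableOn hU).1 ⟨fun z w hzw ↦ ?_, hc⟩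
  rw [← add_eq_zero_iff_eq_neg, wedgeIntegral_add_wedgeIntegral_eq]
  exact integral_boundary_rect_eq_zero_of_differentiableAt_im_ne_zero (hc.mono hzw)
    fun u hu ↦ hd u (hzw hu)

theorem eqOn_zero_of_eq_zero_on_Ioo_of_differentiableOn_upperHalfPlane [CompleteSpace E]
    {F : ℂ → E} (hc : ContinuousOn F {z | 0 ≤ z.im}) (hd : DifferentiableOn ℂ F {z | 0 < z.im})
    {a b : ℝ} (hab : a < b) (h0 : ∀ x ∈ Ioo a b, F x = 0) :
    EqOn F 0 {z | 0 ≤ z.im} := by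
  classical
  set H : Set ℂ := {z | 0 < z.im}
  set S : Set ℂ := {z | a < z.re} ∩ {z | z.re < b}
  have hH : IsOpen H := isOpen_lt continuous_const continuous_im
  have hS : IsOpen S := (isOpen_lt continuous_const continuous_re).inter
    (isOpen_lt continuous_re continuous_const)
  set G : ℂ → E := H.piecewise F 0
  have hG_lower : ∀ z : ℂ, z.im < 0 → G =ᶠ[𝓝 z] 0 := fun z hz ↦ by
    filter_upwards [(isOpen_lt continuous_im continuous_const).mem_nhds hz] with u hu
    exact piecewise_eq_of_notMem _ _ _ (not_lt.2 (le_of_lt hu))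
  have hGc : ContinuousOn G (H ∪ S) := by
    refine ContinuousOn.piecewise (fun z ⟨hz, hzH⟩ ↦ ?_)
      (hc.mono fun z hz ↦ by simpa [H] using hz.2) continuousOn_const
    have him : z.im = 0 := by simpa [H] using hzH
    obtain ⟨x, rfl⟩ : ∃ x : ℝ, (x : ℂ) = z := ⟨z.re, ext rfl (by simp [him])⟩
    exact h0 x (by simpa [H, S] using hz)
  have hGd : DifferentiableOn ℂ G (H ∪ S) := by
    refine differentiableOn_of_continuousOn_of_differentiableAt_im_ne_zero (hH.union hS) hGc
      fun z _ hz ↦ ?_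
    rcases hz.lt_or_gt with hz | hz
    · exact (differentiableAt_const 0).congr_of_eventuallyEq (hG_lower z hz)
    · refine (hd.differentiableAt (hH.mem_nhds hz)).congr_of_eventuallyEq ?_
      filter_upwards [hH.mem_nhds hz] with u hu
      exact piecewise_eq_of_mem _ _ _ hu
  obtain ⟨c, hcab⟩ := nonempty_Ioo.2 hab
  have hconn : IsPreconnected (H ∪ S) :=
    IsPreconnected.union (c + I) (by simp [H]) (by simpa [S] using hcab)
      (convex_halfSpace_im_gt 0).isPreconnected
      ((convex_halfSpace_re_gt a).inter (convex_halfSpace_re_lt b)).isPreconnected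
  have hG0 : EqOn G 0 (H ∪ S) :=
    (hGd.analyticOnNhd (hH.union hS)).eqOn_zero_of_preconnected_of_eventuallyEq_zero hconn
      (Or.inr (by simpa [S] using hcab) : (c - I : ℂ) ∈ H ∪ S) (hG_lower _ (by simp))
  have hF0 : EqOn F 0 H := fun z hz ↦ by simpa [G, hz] using hG0 (Or.inl hz)
  exact hF0.of_subset_closure hc continuousOn_const (fun z (hz : 0 < z.im) ↦ hz.le) (by simp [H])

end HalfPlane

section FourierLaplace

noncomputable def fourierLaplace (μ : Measure ℝ) (w : ℝ → ℂ) (z : ℂ) : ℂ :=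
  ∫ p, cexp (I * p * z) * w p ∂μ

lemma norm_cexp_I_mul_ofReal_mul (p : ℝ) (z : ℂ) :
    ‖cexp (I * p * z)‖ = Real.exp (-(p * z.im)) := by
  simp [norm_exp]

lemma norm_cexp_I_mul_ofReal_mul_le_one {p : ℝ} (hp : 0 ≤ p) {z : ℂ} (hz : 0 ≤ z.im) :
    ‖cexp (I * p * z)‖ ≤ 1 := by
  rw [norm_cexp_I_mul_ofReal_mul, Real.exp_le_one_iff, neg_nonpos]
  exact mul_nonneg hp hz

lemma norm_cexp_I_mul_ofReal_mul_mul_le {p : ℝ} (hp : 0 ≤ p) {y : ℝ} (hy : 0 < y) {z : ℂ}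
    (hz : y ≤ z.im) : ‖cexp (I * p * z) * (I * p)‖ ≤ y⁻¹ := by
  rw [norm_mul, norm_mul, norm_I, one_mul, norm_real, Real.norm_of_nonneg hp,
    norm_cexp_I_mul_ofReal_mul]
  calc Real.exp (-(p * z.im)) * p ≤ Real.exp (-(p * y)) * p := by gcongr
    _ ≤ y⁻¹ := by
      rw [Real.exp_neg, inv_mul_le_iff₀ (Real.exp_pos _), ← div_eq_mul_inv, le_div_iff₀ hy]
      linarith [Real.add_one_le_exp (p * y)]

variable {μ : Measure ℝ} {w : ℝ → ℂ}

lemma aestronglyMeasurable_cexp_I_mul_ofReal_mul (hw : AEStronglyMeasurable w μ) (z : ℂ) :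
    AEStronglyMeasurable (fun p : ℝ ↦ cexp (I * p * z) * w p) μ :=
  (Continuous.aestronglyMeasurable (by fun_prop)).mul hw

lemma ae_norm_cexp_I_mul_ofReal_mul_mul_le (hμ : ∀ᵐ p ∂μ, 0 ≤ p) {z : ℂ} (hz : 0 ≤ z.im) :
    ∀ᵐ p : ℝ ∂μ, ‖cexp (I * p * z) * w p‖ ≤ ‖w p‖ := by
  filter_upwards [hμ] with p hp
  rw [norm_mul]
  exact mul_le_of_le_one_left (norm_nonneg _) (norm_cexp_I_mul_ofReal_mul_le_one hp hz)

theorem continuousOn_fourierLaplace (hμ : ∀ᵐ p ∂μ, 0 ≤ p) (hw : Integrable w μ) :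
    ContinuousOn (fourierLaplace μ w) {z | 0 ≤ z.im} :=
  continuousOn_of_dominated (fun z _ ↦ aestronglyMeasurable_cexp_I_mul_ofReal_mul hw.1 z)
    (fun _ hz ↦ ae_norm_cexp_I_mul_ofReal_mul_mul_le hμ hz) hw.norm
    (ae_of_all _ fun _ ↦ by fun_prop)

theorem differentiableOn_fourierLaplace (hμ : ∀ᵐ p ∂μ, 0 ≤ p) (hw : Integrable w μ) :
    DifferentiableOn ℂ (fourierLaplace μ w) {z | 0 < z.im} := by
  intro z₀ (hz₀ : 0 < z₀.im)
  have hy : 0 < z₀.im / 2 := half_pos hz₀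
  have him : ∀ z ∈ Metric.ball z₀ (z₀.im / 2), z₀.im / 2 ≤ z.im := fun z hz ↦ by
    have := (abs_le.1 ((abs_im_le_norm (z - z₀)).trans (mem_ball_iff_norm.1 hz).le)).1
    rw [sub_im] at this
    linarith
  have hderiv := hasDerivAt_integral_of_dominated_loc_of_deriv_le (μ := μ)
    (F' := fun z p ↦ cexp (I * p * z) * (I * p) * w p) (bound := fun p ↦ (z₀.im / 2)⁻¹ * ‖w p‖)
    (Metric.ball_mem_nhds z₀ hy)
    (Eventually.of_forall (aestronglyMeasurable_cexp_I_mul_ofReal_mul hw.1))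
    (hw.norm.mono' (aestronglyMeasurable_cexp_I_mul_ofReal_mul hw.1 z₀)
      (ae_norm_cexp_I_mul_ofReal_mul_mul_le hμ hz₀.le))
    ((Continuous.aestronglyMeasurable (by fun_prop)).mul hw.1)
    (by
      filter_upwards [hμ] with p hp z hz
      rw [norm_mul]
      gcongr
      exact norm_cexp_I_mul_ofReal_mul_mul_le hp hy (him z hz))
    (hw.norm.const_mul _)
    (ae_of_all _ fun p z _ ↦ by
      simpa using (((hasDerivAt_id z).const_mul (I * p)).cexp.mul_const (w p)))
  exact hderiv.2.differentiableAt.differentiableWithinAt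

end FourierLaplace

lemma ae_eq_zero_of_forall_setIntegral_eq_zero_of_subset {α E : Type*} [MeasurableSpace α]
    [NormedAddCommGroup E] [NormedSpace ℝ E] [CompleteSpace E] {μ : Measure α} {w : α → E}
    (hw : Integrable w μ) {s : Set α} (hs : MeasurableSet s)
    (h : ∀ A : Set α, MeasurableSet A → A ⊆ s → ∫ x in A, w x ∂μ = 0) :
    ∀ᵐ x ∂μ, x ∈ s → w x = 0 :=
  (ae_restrict_iff' hs).1 <| hw.restrict.ae_eq_zero_of_forall_setIntegral_eq_zero fun A hA _ ↦ by
    rw [Measure.restrict_restrict hA]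
    exact h _ (hA.inter hs) inter_subset_right

theorem stmt0_general (μ : Measure ℝ) (w : ℝ → ℂ)
    (hw : Integrable w μ)
    (hsupp : ∀ A : Set ℝ, MeasurableSet A → A ⊆ Set.Iio 0 → ∫ p in A, w p ∂μ = 0)
    (f : ℝ → ℂ)
    (hf : ∀ t : ℝ, f t = ∫ p, Complex.exp (Complex.I * (p : ℂ) * (t : ℂ)) * w p ∂μ)
    (a b : ℝ) (hab : a < b)
    (hvanish : ∀ t ∈ Set.Ioo a b, f t = 0) :
    ∀ t : ℝ, f t = 0 := by
  have hw0 := ae_eq_zero_of_forall_setIntegral_eq_zero_of_subset hw measurableSet_Iio hsupp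
  set ν := μ.restrict (Ici 0)
  have hν : ∀ᵐ p ∂ν, 0 ≤ p := ae_restrict_mem measurableSet_Ici
  have hf_eq : ∀ t : ℝ, f t = fourierLaplace ν w t := fun t ↦ by
    rw [hf, fourierLaplace, setIntegral_eq_integral_of_ae_compl_eq_zero]
    filter_upwards [hw0] with p hp hp'
    rw [hp (by simpa using hp'), mul_zero]
  have hF0 := eqOn_zero_of_eq_zero_on_Ioo_of_differentiableOn_upperHalfPlane
    (continuousOn_fourierLaplace hν hw.restrict) (differentiableOn_fourierLaplace hν hw.restrict)
    hab fun x hx ↦ by rw [← hf_eq]; exact hvanish x hx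
  intro t
  rw [hf_eq]
  exact hF0 (by simp)

/-- A finite complex measure `λ` on `ℝ` is represented as a density `w` (integrable)
with respect to a finite measure `μ`. Support in `[0,∞)` means the measure of every
measurable set disjoint from `[0,∞)` (i.e. contained in `(-∞,0)`) vanishes.
If `f t = ∫ e^{ipt} dλ(p)` vanishes on a nonempty open interval, it vanishes identically. -/
theorem stmt0 (μ : Measure ℝ) [IsFiniteMeasure μ] (w : ℝ → ℂ)
    (hw : Integrable w μ)
    (hsupp : ∀ A : Set ℝ, MeasurableSet A → A ⊆ Set.Iio 0 → ∫ p in A, w p ∂μ = 0)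
    (f : ℝ → ℂ)
    (hf : ∀ t : ℝ, f t = ∫ p, Complex.exp (Complex.I * (p : ℂ) * (t : ℂ)) * w p ∂μ)
    (a b : ℝ) (hab : a < b)
    (hvanish : ∀ t ∈ Set.Ioo a b, f t = 0) :
    ∀ t : ℝ, f t = 0 :=
  stmt0_general μ w hw hsupp f hf a b hab hvanish
end

section
/- Let λ be a finite complex measure on ℝ⁴ supported in the closed forward light cone V̄₊. Then the function F(z) = ∫ exp(i p·z) dλ(p), where p·z is the complexified Minkowski inner product, is well defined, holomorphic on the forward tube T₊ = ℝ⁴ + i V₊ = {x + iy : x ∈ ℝ⁴, y ∈ V₊}, bounded by ‖λ‖ on T₊, and continuous on T₊ ∪ ℝ⁴. -/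
open MeasureTheory

/-- The closed forward light cone `V̄₊`. -/
def fwdCone : Set (Fin 4 → ℝ) :=
  {p | 0 ≤ p 0 ∧ 0 ≤ p 0 ^ 2 - (p 1 ^ 2 + p 2 ^ 2 + p 3 ^ 2)}

/-- The open forward light cone `V₊`. -/
def openCone : Set (Fin 4 → ℝ) :=
  {p | 0 < p 0 ∧ 0 < p 0 ^ 2 - (p 1 ^ 2 + p 2 ^ 2 + p 3 ^ 2)}

/-- The complexified Minkowski inner product `p·z`. -/
def minkC (p : Fin 4 → ℝ) (z : Fin 4 → ℂ) : ℂ :=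
  (p 0 : ℂ) * z 0 - ((p 1 : ℂ) * z 1 + (p 2 : ℂ) * z 2 + (p 3 : ℂ) * z 3)

/-!
For `p ∈ V̄₊`, Cauchy–Schwarz in the spatial variables gives `p·y ≥ p₀ (y₀ - |y⃗|)`, and
`y₀ - |y⃗| ≥ 0` on `V̄₊`. Since `|e^{ip·z}| = e^{-p·Im z}`, the integrand is dominated by `|w|` on
the closed tube, which gives integrability, the bound and (by dominated convergence) continuity.
On the open tube `y₀ - |y⃗| ≥ c > 0` near any point, so the `z`-derivative of the integrand, of
size `≲ p₀ e^{-c p₀} |w(p)| ≲ |w(p)| / c`, is locally dominated as well and one may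
differentiate under the integral sign.
-/

open Filter Topology Complex

def minkR (p y : Fin 4 → ℝ) : ℝ :=
  p 0 * y 0 - (p 1 * y 1 + p 2 * y 2 + p 3 * y 3)

noncomputable def coneMargin (y : Fin 4 → ℝ) : ℝ :=
  y 0 - √(y 1 ^ 2 + y 2 ^ 2 + y 3 ^ 2)

lemma openCone_subset_fwdCone : openCone ⊆ fwdCone := fun _ hp => ⟨hp.1.le, hp.2.le⟩

lemma abs_le_of_mem_fwdCone {p : Fin 4 → ℝ} (hp : p ∈ fwdCone) (i : Fin 4) : |p i| ≤ p 0 := by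
  obtain ⟨h0, h1⟩ := hp
  fin_cases i <;> simp only [Fin.zero_eta, Fin.mk_one, Fin.reduceFinMk, abs_le] <;>
    constructor <;> nlinarith [sq_nonneg (p 1), sq_nonneg (p 2), sq_nonneg (p 3)]

lemma norm_eq_of_mem_fwdCone {p : Fin 4 → ℝ} (hp : p ∈ fwdCone) : ‖p‖ = p 0 := by
  refine le_antisymm ((pi_norm_le_iff_of_nonneg hp.1).2 fun i => ?_) ?_
  · rw [Real.norm_eq_abs]; exact abs_le_of_mem_fwdCone hp i
  · exact (le_abs_self _).trans ((Real.norm_eq_abs _).symm.trans_le (norm_le_pi_norm p 0))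

lemma spatial_le_mul_sqrt_of_mem_fwdCone {p : Fin 4 → ℝ} (hp : p ∈ fwdCone) (a b c : ℝ) :
    p 1 * a + p 2 * b + p 3 * c ≤ p 0 * √(a ^ 2 + b ^ 2 + c ^ 2) := by
  obtain ⟨h0, h1⟩ := hp
  set s := √(a ^ 2 + b ^ 2 + c ^ 2)
  have hs : 0 ≤ s := Real.sqrt_nonneg _
  have hs2 : s ^ 2 = a ^ 2 + b ^ 2 + c ^ 2 := Real.sq_sqrt (by positivity)
  nlinarith [sq_nonneg (p 1 * b - p 2 * a), sq_nonneg (p 1 * c - p 3 * a),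
    sq_nonneg (p 2 * c - p 3 * b), sq_nonneg (p 1 * a + p 2 * b + p 3 * c - p 0 * s),
    sq_nonneg (p 1 * a + p 2 * b + p 3 * c + p 0 * s), mul_nonneg h0 hs]

lemma mul_coneMargin_le_minkR {p : Fin 4 → ℝ} (hp : p ∈ fwdCone) (y : Fin 4 → ℝ) :
    p 0 * coneMargin y ≤ minkR p y := by
  have := spatial_le_mul_sqrt_of_mem_fwdCone hp (y 1) (y 2) (y 3)
  unfold coneMargin minkR
  linarith

lemma coneMargin_nonneg {y : Fin 4 → ℝ} (hy : y ∈ fwdCone) : 0 ≤ coneMargin y :=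
  sub_nonneg.2 (Real.sqrt_le_iff.2 ⟨hy.1, by linarith [hy.2]⟩)

lemma coneMargin_pos {y : Fin 4 → ℝ} (hy : y ∈ openCone) : 0 < coneMargin y :=
  sub_pos.2 ((Real.sqrt_lt' hy.1).2 (by linarith [hy.2]))

lemma continuous_coneMargin : Continuous coneMargin := by
  unfold coneMargin; fun_prop

lemma norm_cexp_I_mul_minkC (p : Fin 4 → ℝ) (z : Fin 4 → ℂ) :
    ‖cexp (I * minkC p z)‖ = Real.exp (-minkR p fun j => (z j).im) := by
  rw [norm_exp]
  simp [minkC, minkR, mul_re, mul_im]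

lemma norm_cexp_I_mul_minkC_le {p : Fin 4 → ℝ} (hp : p ∈ fwdCone) (z : Fin 4 → ℂ) :
    ‖cexp (I * minkC p z)‖ ≤ Real.exp (-(p 0 * coneMargin fun j => (z j).im)) := by
  rw [norm_cexp_I_mul_minkC, Real.exp_le_exp, neg_le_neg_iff]
  exact mul_coneMargin_le_minkR hp _

lemma norm_cexp_I_mul_minkC_le_one {p : Fin 4 → ℝ} (hp : p ∈ fwdCone) {z : Fin 4 → ℂ}
    (hz : (fun j => (z j).im) ∈ fwdCone) : ‖cexp (I * minkC p z)‖ ≤ 1 :=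
  (norm_cexp_I_mul_minkC_le hp z).trans
    (Real.exp_le_one_iff.2 (neg_nonpos.2 (mul_nonneg hp.1 (coneMargin_nonneg hz))))

noncomputable def minkCL (p : Fin 4 → ℝ) : (Fin 4 → ℂ) →L[ℂ] ℂ :=
  (p 0 : ℂ) • ContinuousLinearMap.proj 0 -
    ((p 1 : ℂ) • ContinuousLinearMap.proj 1 + (p 2 : ℂ) • ContinuousLinearMap.proj 2 +
      (p 3 : ℂ) • ContinuousLinearMap.proj 3)

lemma coe_minkCL (p : Fin 4 → ℝ) : ⇑(minkCL p) = minkC p := by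
  ext z; simp [minkCL, minkC]

lemma continuous_minkCL : Continuous minkCL := by
  unfold minkCL; fun_prop

lemma norm_minkCL_le (p : Fin 4 → ℝ) : ‖minkCL p‖ ≤ 4 * ‖p‖ := by
  refine ContinuousLinearMap.opNorm_le_bound _ (by positivity) fun z => ?_
  have h : ∀ i, ‖(p i : ℂ) * z i‖ ≤ ‖p‖ * ‖z‖ := fun i => by
    rw [norm_mul, norm_real]
    exact mul_le_mul (norm_le_pi_norm p i) (norm_le_pi_norm z i) (norm_nonneg _) (norm_nonneg _)
  calc ‖minkCL p z‖
      ≤ ‖(p 0 : ℂ) * z 0‖ + (‖(p 1 : ℂ) * z 1‖ + ‖(p 2 : ℂ) * z 2‖ + ‖(p 3 : ℂ) * z 3‖) := by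
        rw [coe_minkCL, minkC]
        exact (norm_sub_le _ _).trans (add_le_add le_rfl norm_add₃_le)
    _ ≤ 4 * ‖p‖ * ‖z‖ := by linarith [h 0, h 1, h 2, h 3]

lemma hasFDerivAt_cexp_I_mul_minkC (p : Fin 4 → ℝ) (z : Fin 4 → ℂ) :
    HasFDerivAt (fun z => cexp (I * minkC p z)) (cexp (I * minkC p z) • I • minkCL p) z := by
  rw [← coe_minkCL]
  exact ((minkCL p).hasFDerivAt.const_mul I).cexp

lemma mul_exp_neg_mul_le {a : ℝ} (ha : 0 < a) (t : ℝ) : t * Real.exp (-(a * t)) ≤ a⁻¹ := by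
  rw [Real.exp_neg, ← div_eq_mul_inv, div_le_iff₀ (Real.exp_pos _), ← div_eq_inv_mul,
    le_div_iff₀ ha, mul_comm]
  linarith [Real.add_one_le_exp (a * t)]

lemma norm_cexp_I_mul_minkC_mul_norm_minkCL_le {p : Fin 4 → ℝ} (hp : p ∈ fwdCone)
    {a : ℝ} (ha : 0 < a) {z : Fin 4 → ℂ} (hz : a ≤ coneMargin fun j => (z j).im) :
    ‖cexp (I * minkC p z)‖ * ‖minkCL p‖ ≤ 4 * a⁻¹ :=
  calc ‖cexp (I * minkC p z)‖ * ‖minkCL p‖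
      ≤ Real.exp (-(a * p 0)) * (4 * p 0) := by
        gcongr
        · exact (norm_cexp_I_mul_minkC_le hp z).trans
            (Real.exp_le_exp.2 (by nlinarith [hp.1]))
        · exact (norm_minkCL_le p).trans_eq (by rw [norm_eq_of_mem_fwdCone hp])
    _ = 4 * (p 0 * Real.exp (-(a * p 0))) := by ring
    _ ≤ 4 * a⁻¹ := by gcongr; exact mul_exp_neg_mul_le ha _

section TubeIntegral

variable {μ : Measure (Fin 4 → ℝ)} {w : (Fin 4 → ℝ) → ℂ}

lemma aestronglyMeasurable_cexp_I_mul_minkC_mul (hw : AEStronglyMeasurable w μ)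
    (z : Fin 4 → ℂ) : AEStronglyMeasurable (fun p => cexp (I * minkC p z) * w p) μ :=
  (Continuous.aestronglyMeasurable (by unfold minkC; fun_prop)).mul hw

lemma ae_norm_cexp_I_mul_minkC_mul_le (hsupp : ∀ᵐ p ∂μ, p ∈ fwdCone) {z : Fin 4 → ℂ}
    (hz : (fun j => (z j).im) ∈ fwdCone) :
    ∀ᵐ p ∂μ, ‖cexp (I * minkC p z) * w p‖ ≤ ‖w p‖ := by
  filter_upwards [hsupp] with p hp
  rw [norm_mul]
  exact mul_le_of_le_one_left (norm_nonneg _) (norm_cexp_I_mul_minkC_le_one hp hz)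

lemma integrable_cexp_I_mul_minkC_mul (hw : Integrable w μ) (hsupp : ∀ᵐ p ∂μ, p ∈ fwdCone)
    {z : Fin 4 → ℂ} (hz : (fun j => (z j).im) ∈ fwdCone) :
    Integrable (fun p => cexp (I * minkC p z) * w p) μ :=
  hw.norm.mono' (aestronglyMeasurable_cexp_I_mul_minkC_mul hw.1 z)
    (ae_norm_cexp_I_mul_minkC_mul_le hsupp hz)

lemma norm_integral_cexp_I_mul_minkC_mul_le (hw : Integrable w μ)
    (hsupp : ∀ᵐ p ∂μ, p ∈ fwdCone) {z : Fin 4 → ℂ} (hz : (fun j => (z j).im) ∈ fwdCone) :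
    ‖∫ p, cexp (I * minkC p z) * w p ∂μ‖ ≤ ∫ p, ‖w p‖ ∂μ :=
  norm_integral_le_of_norm_le hw.norm (ae_norm_cexp_I_mul_minkC_mul_le hsupp hz)

lemma continuousOn_integral_cexp_I_mul_minkC_mul (hw : Integrable w μ)
    (hsupp : ∀ᵐ p ∂μ, p ∈ fwdCone) :
    ContinuousOn (fun z => ∫ p, cexp (I * minkC p z) * w p ∂μ)
      {z | (fun j => (z j).im) ∈ fwdCone} :=
  continuousOn_of_dominated (fun z _ => aestronglyMeasurable_cexp_I_mul_minkC_mul hw.1 z)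
    (fun _ hz => ae_norm_cexp_I_mul_minkC_mul_le hsupp hz) hw.norm
    (ae_of_all _ fun p => (Continuous.continuousOn (by unfold minkC; fun_prop)))

lemma differentiableOn_integral_cexp_I_mul_minkC_mul (hw : Integrable w μ)
    (hsupp : ∀ᵐ p ∂μ, p ∈ fwdCone) :
    DifferentiableOn ℂ (fun z => ∫ p, cexp (I * minkC p z) * w p ∂μ)
      {z | (fun j => (z j).im) ∈ openCone} := by
  intro z₀ hz₀
  set c := coneMargin fun j => (z₀ j).im
  have hc : 0 < c := coneMargin_pos hz₀
  have hs : {z : Fin 4 → ℂ | c / 2 < coneMargin fun j => (z j).im} ∈ 𝓝 z₀ :=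
    (isOpen_lt continuous_const (continuous_coneMargin.comp (by fun_prop))).mem_nhds
      (half_lt_self hc)
  have h_bound : ∀ᵐ p ∂μ, ∀ z ∈ {z : Fin 4 → ℂ | c / 2 < coneMargin fun j => (z j).im},
      ‖w p • cexp (I * minkC p z) • I • minkCL p‖ ≤ 4 * (c / 2)⁻¹ * ‖w p‖ := by
    filter_upwards [hsupp] with p hp z hz
    rw [norm_smul, norm_smul, norm_smul, norm_I, one_mul, mul_comm _ ‖w p‖]
    exact mul_le_mul_of_nonneg_left
      (norm_cexp_I_mul_minkC_mul_norm_minkCL_le hp (half_pos hc) hz.le) (norm_nonneg _)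
  have h_meas : AEStronglyMeasurable (fun p => w p • cexp (I * minkC p z₀) • I • minkCL p) μ :=
    hw.1.smul (Continuous.aestronglyMeasurable
      ((by unfold minkC; fun_prop : Continuous fun p => cexp (I * minkC p z₀)).smul
        (continuous_minkCL.const_smul I)))
  exact (hasFDerivAt_integral_of_dominated_of_fderiv_le hs
    (Eventually.of_forall (aestronglyMeasurable_cexp_I_mul_minkC_mul hw.1))
    (integrable_cexp_I_mul_minkC_mul hw hsupp (openCone_subset_fwdCone hz₀)) h_meas h_bound
    (hw.norm.const_mul _) (ae_of_all _ fun p z _ =>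
      (hasFDerivAt_cexp_I_mul_minkC p z).mul_const (w p))).differentiableAt.differentiableWithinAt

end TubeIntegral

theorem stmt8_general (μ : Measure (Fin 4 → ℝ))
    (w : (Fin 4 → ℝ) → ℂ) (hw : Integrable w μ)
    (hsupp : ∀ᵐ p ∂μ, p ∈ fwdCone)
    (F : (Fin 4 → ℂ) → ℂ)
    (hF : ∀ z : Fin 4 → ℂ,
      F z = ∫ p, Complex.exp (Complex.I * minkC p z) * w p ∂μ) :
    (∀ z : Fin 4 → ℂ, (fun j => (z j).im) ∈ fwdCone →
        Integrable (fun p => Complex.exp (Complex.I * minkC p z) * w p) μ) ∧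
    DifferentiableOn ℂ F {z : Fin 4 → ℂ | (fun j => (z j).im) ∈ openCone} ∧
    (∀ z : Fin 4 → ℂ, (fun j => (z j).im) ∈ openCone → ‖F z‖ ≤ ∫ p, ‖w p‖ ∂μ) ∧
    ContinuousOn F
      {z : Fin 4 → ℂ | (fun j => (z j).im) ∈ openCone ∨ ∀ j, (z j).im = 0} := by
  obtain rfl : F = fun z => ∫ p, cexp (I * minkC p z) * w p ∂μ := funext hF
  have h_real : ∀ z : Fin 4 → ℂ, (∀ j, (z j).im = 0) → (fun j => (z j).im) ∈ fwdCone :=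
    fun z hz => by simp [hz, fwdCone]
  refine ⟨fun z hz => integrable_cexp_I_mul_minkC_mul hw hsupp hz,
    differentiableOn_integral_cexp_I_mul_minkC_mul hw hsupp,
    fun z hz => norm_integral_cexp_I_mul_minkC_mul_le hw hsupp (openCone_subset_fwdCone hz),
    (continuousOn_integral_cexp_I_mul_minkC_mul hw hsupp).mono ?_⟩
  rintro z (hz | hz)
  exacts [openCone_subset_fwdCone hz, h_real z hz]

/-- For a finite complex measure supported in the closed forward cone (density `w` w.r.t.
a finite measure `μ`), `F z = ∫ e^{i p·z} dλ(p)` is well defined on the closed forward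
tube, holomorphic on the forward tube `T₊ = ℝ⁴ + iV₊`, bounded there by the total
variation, and continuous on `T₊ ∪ ℝ⁴`. -/
theorem stmt8 (μ : Measure (Fin 4 → ℝ)) [IsFiniteMeasure μ]
    (w : (Fin 4 → ℝ) → ℂ) (hw : Integrable w μ)
    (hsupp : ∀ᵐ p ∂μ, p ∈ fwdCone)
    (F : (Fin 4 → ℂ) → ℂ)
    (hF : ∀ z : Fin 4 → ℂ,
      F z = ∫ p, Complex.exp (Complex.I * minkC p z) * w p ∂μ) :
    (∀ z : Fin 4 → ℂ, (fun j => (z j).im) ∈ fwdCone →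
        Integrable (fun p => Complex.exp (Complex.I * minkC p z) * w p) μ) ∧
    DifferentiableOn ℂ F {z : Fin 4 → ℂ | (fun j => (z j).im) ∈ openCone} ∧
    (∀ z : Fin 4 → ℂ, (fun j => (z j).im) ∈ openCone → ‖F z‖ ≤ ∫ p, ‖w p‖ ∂μ) ∧
    ContinuousOn F
      {z : Fin 4 → ℂ | (fun j => (z j).im) ∈ openCone ∨ ∀ j, (z j).im = 0} :=
  stmt8_general μ w hw hsupp F hF
end
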